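/- arXiv:1103.5657 — 6 statements merged into one kernel-verified Lean document; each statement's English description precedes it below -/
import Mathlib

section
/- Let $x_0,\ldots,x_t$ and $\beta$ be integers, and define $x_\nu := \beta + \min_{j_1+j_2=\nu-1,\ j_1,j_2\ge 0}(x_{j_1}+x_{j_2})$ for all $\nu \ge t+1$. Let $p$ be an index with $0\le p\le t$ minimizing $(x_j+\beta)/(j+1)$. Then for all $\nu \ge t+1$ we have $x_\nu - x_{\nu-(p+1)} \le x_p + \beta$. -/
theorem stmt0 (t : ℕ) (β : ℤ) (x : ℕ → ℤ)
    (hrec : ∀ ν : ℕ, ∀ _hν : t + 1 ≤ ν,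
      x ν = β + (Finset.range ν).inf' (Finset.nonempty_range_iff.mpr (by omega))
        (fun j => x j + x (ν - 1 - j)))
    (p : ℕ) (hp : p ≤ t) :
    ∀ ν : ℕ, t + 1 ≤ ν → x ν - x (ν - (p + 1)) ≤ x p + β := by
  intro ν hν
  have hsplit : x ν ≤ β + (x p + x (ν - 1 - p)) := by
    rw [hrec ν hν]
    have hp_mem : p ∈ Finset.range ν := Finset.mem_range.mpr (by omega)
    exact add_le_add_right (Finset.inf'_le (fun j => x j + x (ν - 1 - j)) hp_mem) β
  rw [show ν - (p + 1) = ν - 1 - p by omega]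
  linarith
end

section
/- Let $r\ge 2$ and let $\alpha=(\alpha_i)_{i\ge 1}$ be a sequence with entries in $\{1,\ldots,r\}$. Define $\nu_{i,s}:=1+|\{1\le j\le i : \alpha_j=s\}|$, sequences $x_s$ with $x_{s,0}:=0$, and for $i\ge 0$: $k_i := 1+\sum_{s=1}^r \min_{j_1+j_2=\nu_{i,s}-1,\ j_1,j_2\ge 0}(x_{s,j_1}+x_{s,j_2})$, and $x_{s,\nu_{i,s}}:=k_i$ if $\alpha_{i+1}=s$. Then the sequence $(k_i)_{i\ge 0}$ is strictly increasing. -/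
/-!
Write `c s i` for the number of `j < i` with `α j = s`, so that `k i` is determined by the
min-plus self-convolutions of the `x s` at `c s i`. Passing from `i` to `i + 1` changes only
`c (α i)`, which grows by one; hence it suffices that `m ↦ minConv (x s) m` increases along
the defined part of `x s`, which holds as soon as that part increases. But the defined values
`x s 1, x s 2, …` are earlier values of `k`, in order, so strong induction closes the loop
(`x s 0 = 0 < 1 = k 0` starts it).
-/

open Finset Nat

/-- `minConv x m = min_{i + j = m} (x i + x j)`, the min-plus self-convolution of `x` at `m`. -/
def minConv {M : Type*} [AddCommMonoid M] [LinearOrder M] (x : ℕ → M) (m : ℕ) : M :=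
  (range (m + 1)).inf' nonempty_range_add_one fun j => x j + x (m - j)

lemma minConv_zero {M : Type*} [AddCommMonoid M] [LinearOrder M] (x : ℕ → M) :
    minConv x 0 = x 0 + x 0 := by
  simp [minConv]

lemma minConv_lt_minConv_succ {M : Type*} [AddCommMonoid M] [LinearOrder M]
    [IsOrderedCancelAddMonoid M] {x : ℕ → M} {m : ℕ} (hx : ∀ j ≤ m, x j < x (j + 1)) :
    minConv x m < minConv x (m + 1) := by
  refine (lt_inf'_iff _).2 fun j hj => ?_
  have hjm : j ≤ m + 1 := Nat.lt_succ_iff.1 (mem_range.1 hj)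
  cases j with
  | zero =>
    calc minConv x m ≤ x 0 + x m := inf'_le _ (mem_range.2 m.succ_pos)
      _ < x 0 + x (m + 1) := add_lt_add_right (hx m le_rfl) _
  | succ j =>
    calc minConv x m ≤ x j + x (m - j) := inf'_le _ (mem_range.2 (by omega))
      _ < x (j + 1) + x (m - j) := add_lt_add_left (hx j (by omega)) _
      _ = x (j + 1) + x (m + 1 - (j + 1)) := by rw [Nat.add_sub_add_right]

/-- If `y` records the values of `k` at the successive occurrences of `p`, shifted by one, then
`y` increases as long as `k` does. -/
lemma lt_apply_succ_of_lt_count {β : Type*} [Preorder β] (p : ℕ → Prop) [DecidablePred p]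
    {y k : ℕ → β} {n : ℕ} (hy : ∀ i, p i → y (count p i + 1) = k i)
    (hk : StrictMonoOn k (Set.Iio n)) (h0 : y 0 < k 0) {m : ℕ} (hm : m < count p n) :
    y m < y (m + 1) := by
  have hcard {j : ℕ} (hj : j < count p n) : ∀ hf : (Set.ofPred p).Finite, j < #hf.toFinset :=
    fun hf => hj.trans_le (count_le_card hf n)
  have hval {j : ℕ} (hj : j < count p n) : y (j + 1) = k (nth p j) := by
    simpa only [count_nth (hcard hj)] using hy _ (nth_mem j (hcard hj))
  have hmem : nth p m ∈ Set.Iio n := nth_lt_of_lt_count hm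
  rw [hval hm]
  cases m with
  | zero => exact h0.trans_le (hk.monotoneOn ((Nat.zero_le _).trans_lt hmem) hmem (Nat.zero_le _))
  | succ m =>
    have hm' : m < count p n := by omega
    rw [hval hm']
    exact hk (nth_lt_of_lt_count hm') hmem (nth_lt_nth' (lt_add_one m) (hcard hm))

lemma recursion_apply_zero {r : ℕ} {α : ℕ → Fin r} {x : Fin r → ℕ → ℤ} {k : ℕ → ℤ}
    (hx0 : ∀ s, x s 0 = 0) (hk : ∀ i, k i = 1 + ∑ s, minConv (x s) (count (α · = s) i)) :
    k 0 = 1 := by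
  simp [hk, minConv_zero, hx0]

lemma recursion_lt_succ {r : ℕ} {α : ℕ → Fin r} {x : Fin r → ℕ → ℤ} {k : ℕ → ℤ}
    (hx0 : ∀ s, x s 0 = 0) (hk : ∀ i, k i = 1 + ∑ s, minConv (x s) (count (α · = s) i))
    (hstep : ∀ i, x (α i) (count (α · = α i) i + 1) = k i) {i : ℕ}
    (hmono : StrictMonoOn k (Set.Iic i)) : k i < k (i + 1) := by
  have hx_lt : ∀ j ≤ count (α · = α i) i, x (α i) j < x (α i) (j + 1) := by
    intro j hj
    refine lt_apply_succ_of_lt_count (α · = α i) (n := i + 1)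
      (fun i' hi' => hi' ▸ hstep i') ?_ ?_ ?_
    · simpa [Set.Iio_add_one_eq_Iic] using hmono
    · rw [hx0, recursion_apply_zero hx0 hk]; exact one_pos
    · rw [count_succ, if_pos rfl]; omega
  have hterm : ∀ s,
      minConv (x s) (count (α · = s) i) ≤ minConv (x s) (count (α · = s) (i + 1)) := by
    intro s
    rw [count_succ]
    split_ifs with hs
    · subst hs; exact (minConv_lt_minConv_succ hx_lt).le
    · rw [add_zero]
  rw [hk, hk]
  gcongr 1 + ?_
  exact sum_lt_sum (fun s _ => hterm s) ⟨α i, mem_univ _, by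
    rw [count_succ, if_pos rfl]; exact minConv_lt_minConv_succ hx_lt⟩

lemma recursion_strictMono {r : ℕ} {α : ℕ → Fin r} {x : Fin r → ℕ → ℤ} {k : ℕ → ℤ}
    (hx0 : ∀ s, x s 0 = 0) (hk : ∀ i, k i = 1 + ∑ s, minConv (x s) (count (α · = s) i))
    (hstep : ∀ i, x (α i) (count (α · = α i) i + 1) = k i) : StrictMono k := by
  refine strictMono_nat_of_lt_succ fun i => ?_
  induction i using Nat.strong_induction_on with
  | _ i ih => exact recursion_lt_succ hx0 hk hstep (strictMonoOn_Iic_of_lt_succ ih)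

theorem stmt5 (r : ℕ) (α : ℕ → Fin r)
    (x : Fin r → ℕ → ℤ) (k : ℕ → ℤ)
    (hx0 : ∀ s, x s 0 = 0)
    (hk : ∀ i : ℕ, k i = 1 + ∑ s : Fin r,
      (Finset.range (1 + ((Finset.range i).filter (fun j => α j = s)).card)).inf'
        (Finset.nonempty_range_iff.mpr (by omega))
        (fun j => x s j + x s (((Finset.range i).filter (fun j => α j = s)).card - j)))
    (hstep : ∀ i : ℕ,
      x (α i) (1 + ((Finset.range i).filter (fun j => α j = α i)).card) = k i) :
    StrictMono k := by
  refine recursion_strictMono (α := α) hx0 (fun i => ?_) (fun i => ?_)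
  · simp only [hk i, minConv, count_eq_card_filter_range, Nat.add_comm 1]
  · rw [count_eq_card_filter_range, Nat.add_comm, hstep]
end

section
/- Let $p$ range over positive integers and $\mu$ over reals with $0\le \mu < 1$. Then the maximum of $\min\{4+\mu/p,\ 4+(1-2\mu)/(p+\mu)\}$ over all such $(p,\mu)$ equals $\frac{1}{2}(\sqrt{13}+5)$, attained at $p=1$ and $\mu=\frac{1}{2}(\sqrt{13}-3)$. -/
/-! Write `c = (√13 - 3) / 2`, the positive root of `c ^ 2 + 3 * c = 1`. The term `μ / p` grows
with `μ` and `(1 - 2μ) / (p + μ)` decreases, so the minimum is at most `c` unless `μ > c p`; but then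
`c (p + μ) + 2μ - 1 > p (c ^ 2 + 3c) - 1 = p - 1 ≥ 0`. At `p = 1, μ = c` both terms equal `c`. -/

open Real

lemma sq_add_three_mul_sqrt_thirteen :
    ((√13 - 3) / 2) ^ 2 + 3 * ((√13 - 3) / 2) = 1 := by
  nlinarith [sq_sqrt (show (0 : ℝ) ≤ 13 by norm_num)]

lemma sqrt_thirteen_sub_three_div_two_nonneg : 0 ≤ (√13 - 3) / 2 := by
  have : (3 : ℝ) ≤ √13 := le_sqrt_of_sq_le (by norm_num)
  linarith

lemma min_div_div_le_of_sq_add_three_mul_eq_one {p μ c : ℝ} (hp : 1 ≤ p) (hc0 : 0 ≤ c)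
    (hc : c ^ 2 + 3 * c = 1) : min (μ / p) ((1 - 2 * μ) / (p + μ)) ≤ c := by
  rcases le_or_gt μ (c * p) with hμ | hμ
  · exact (min_le_left _ _).trans ((div_le_iff₀ (by linarith)).2 hμ)
  · refine (min_le_right _ _).trans ((div_le_iff₀ (by nlinarith)).2 ?_)
    nlinarith

lemma min_div_div_eq_of_sq_add_three_mul_eq_one {c : ℝ} (hc0 : 0 ≤ c)
    (hc : c ^ 2 + 3 * c = 1) : min (c / 1) ((1 - 2 * c) / (1 + c)) = c := by
  have hright : (1 - 2 * c) / (1 + c) = c := by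
    rw [div_eq_iff (by linarith)]
    linarith
  rw [div_one, hright, min_self]

theorem stmt7 :
    IsGreatest {v : ℝ | ∃ (p : ℕ) (μ : ℝ), 1 ≤ p ∧ 0 ≤ μ ∧ μ < 1 ∧
        v = min (4 + μ / p) (4 + (1 - 2 * μ) / (p + μ))}
      ((Real.sqrt 13 + 5) / 2) ∧
    min (4 + ((Real.sqrt 13 - 3) / 2) / (1 : ℝ))
        (4 + (1 - 2 * ((Real.sqrt 13 - 3) / 2)) / ((1 : ℝ) + (Real.sqrt 13 - 3) / 2))
      = (Real.sqrt 13 + 5) / 2 := by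
  have hc := sq_add_three_mul_sqrt_thirteen
  have hc0 := sqrt_thirteen_sub_three_div_two_nonneg
  have hc1 : (√13 - 3) / 2 < 1 := by nlinarith
  have hvalue : (√13 + 5) / 2 = 4 + (√13 - 3) / 2 := by ring
  have hattained : min (4 + ((√13 - 3) / 2) / (1 : ℝ))
      (4 + (1 - 2 * ((√13 - 3) / 2)) / ((1 : ℝ) + (√13 - 3) / 2)) = (√13 + 5) / 2 := by
    rw [min_add_add_left, min_div_div_eq_of_sq_add_three_mul_eq_one hc0 hc, hvalue]
  refine ⟨⟨⟨1, (√13 - 3) / 2, le_rfl, hc0, hc1, by exact_mod_cast hattained.symm⟩, ?_⟩,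
    hattained⟩
  rintro v ⟨p, μ, hp, -, -, rfl⟩
  rw [min_add_add_left, hvalue, add_le_add_iff_left]
  exact min_div_div_le_of_sq_add_three_mul_eq_one (by exact_mod_cast hp) hc0 hc
end

section
/- Let $\mu_2,\mu_3$ range over reals with $0\le\mu_2<1$ and $0\le\mu_3<1$. Then the maximum of $\min\{5+2\mu_2,\ 6-3\mu_2/(1+\mu_2),\ 5+\mu_3,\ 6+(1-4\mu_3)/(1+\mu_3)\}$ equals $\sqrt{6}+3$, attained at $\mu_2=\frac{1}{2}(\sqrt{6}-2)$ and $\mu_3=\sqrt{6}-2$. -/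
/-!
The first two terms depend only on `μ₂`: `5 + 2μ₂` increases and `6 - 3μ₂/(1 + μ₂)` decreases,
so their minimum is at most their common value at the crossing point, the positive root
`μ₂ = (√6 - 2)/2` of `2μ₂² + 4μ₂ - 1 = 0`, where both equal `√6 + 3`. At `μ₃ = √6 - 2` the other
two terms equal `√6 + 3` as well, so the bound is attained.
-/

open Real

lemma min_le_max_of_monotoneOn_of_antitoneOn {α β : Type*} [LinearOrder α] [LinearOrder β]
    {f g : α → β} {s : Set α} (hf : MonotoneOn f s) (hg : AntitoneOn g s) {c x : α}
    (hc : c ∈ s) (hx : x ∈ s) : min (f x) (g x) ≤ max (f c) (g c) := by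
  rcases le_total x c with hxc | hcx
  · exact (min_le_left _ _).trans ((hf hx hc hxc).trans (le_max_left _ _))
  · exact (min_le_right _ _).trans ((hg hc hx hcx).trans (le_max_right _ _))

lemma antitoneOn_six_sub_three_mul_div_one_add :
    AntitoneOn (fun μ : ℝ => 6 - 3 * μ / (1 + μ)) (Set.Ioi (-1)) := by
  intro a (ha : -1 < a) b (hb : -1 < b) hab
  simp only [sub_le_sub_iff_left]
  rw [div_le_div_iff₀ (by linarith) (by linarith)]
  nlinarith

lemma sqrt_six_bounds : 2 < √6 ∧ √6 < 3 := by
  have hsq : √6 ^ 2 = 6 := sq_sqrt (by norm_num)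
  constructor <;> nlinarith [sqrt_nonneg 6]

lemma six_sub_div_at_half_sqrt_six_sub_two :
    6 - 3 * ((√6 - 2) / 2) / (1 + (√6 - 2) / 2) = √6 + 3 := by
  have hsq : √6 ^ 2 = 6 := sq_sqrt (by norm_num)
  have hs : 0 < √6 := by positivity
  rw [show 1 + (√6 - 2) / 2 = √6 / 2 by ring]
  field_simp
  nlinarith

lemma six_add_div_at_sqrt_six_sub_two :
    6 + (1 - 4 * (√6 - 2)) / (1 + (√6 - 2)) = √6 + 3 := by
  have hsq : √6 ^ 2 = 6 := sq_sqrt (by norm_num)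
  have hs : √6 - 1 ≠ 0 := by nlinarith [sqrt_nonneg 6]
  rw [show 1 + (√6 - 2) = √6 - 1 by ring]
  field_simp
  nlinarith

theorem stmt8 :
    IsGreatest {v : ℝ | ∃ μ₂ μ₃ : ℝ, 0 ≤ μ₂ ∧ μ₂ < 1 ∧ 0 ≤ μ₃ ∧ μ₃ < 1 ∧
        v = min (min (5 + 2 * μ₂) (6 - 3 * μ₂ / (1 + μ₂)))
              (min (5 + μ₃) (6 + (1 - 4 * μ₃) / (1 + μ₃)))}
      (Real.sqrt 6 + 3) ∧
    min (min (5 + 2 * ((Real.sqrt 6 - 2) / 2)) (6 - 3 * ((Real.sqrt 6 - 2) / 2) / (1 + (Real.sqrt 6 - 2) / 2)))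
        (min (5 + (Real.sqrt 6 - 2)) (6 + (1 - 4 * (Real.sqrt 6 - 2)) / (1 + (Real.sqrt 6 - 2))))
      = Real.sqrt 6 + 3 := by
  obtain ⟨hs2, hs3⟩ := sqrt_six_bounds
  have h₂ : 5 + 2 * ((√6 - 2) / 2) = √6 + 3 := by ring
  have h₃ : 5 + (√6 - 2) = √6 + 3 := by ring
  have hopt := six_sub_div_at_half_sqrt_six_sub_two
  have hval : min (min (5 + 2 * ((√6 - 2) / 2)) (6 - 3 * ((√6 - 2) / 2) / (1 + (√6 - 2) / 2)))
      (min (5 + (√6 - 2)) (6 + (1 - 4 * (√6 - 2)) / (1 + (√6 - 2)))) = √6 + 3 := by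
    rw [h₂, hopt, h₃, six_add_div_at_sqrt_six_sub_two, min_self, min_self]
  refine ⟨⟨⟨(√6 - 2) / 2, √6 - 2, by linarith, by linarith, by linarith, by linarith,
    hval.symm⟩, ?_⟩, hval⟩
  rintro v ⟨μ₂, μ₃, hμ₂, -, -, -, rfl⟩
  calc _ ≤ min (5 + 2 * μ₂) (6 - 3 * μ₂ / (1 + μ₂)) := min_le_left _ _
    _ ≤ max (5 + 2 * ((√6 - 2) / 2)) (6 - 3 * ((√6 - 2) / 2) / (1 + (√6 - 2) / 2)) :=
      min_le_max_of_monotoneOn_of_antitoneOn (f := fun μ => 5 + 2 * μ)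
        (fun _ _ _ _ hab => by linarith) antitoneOn_six_sub_three_mul_div_one_add
        (Set.mem_Ioi.2 (by linarith)) (Set.mem_Ioi.2 (by linarith))
    _ = √6 + 3 := by rw [h₂, hopt, max_self]
end

section
/- Let $\mu_2,\mu_3$ range over reals with $0\le\mu_2<1$ and $0\le\mu_3<1$. Then the maximum of $\min\{4+(3-2\mu_2+\mu_3)/(1+\mu_2),\ 6+\mu_2+\mu_3,\ 6+(2+\mu_2-4\mu_3)/(1+\mu_3)\}$ equals $\frac{1}{2}(\sqrt{37}+7)$, attained at $\mu_2=\frac{1}{6}(\sqrt{37}-5)$ and $\mu_3=\frac{1}{3}(\sqrt{37}-5)$. -/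
/-!
Once the (positive) denominators are cleared, each of the three conditions "term > t" is an open
half-plane in `(μ₂, μ₃)`, linear in `μ₂, μ₃` for fixed `t`. For `t = (√37 + 7) / 2` the three
boundary lines pass through the common point `((√37 - 5) / 6, (√37 - 5) / 3)`, and the three strict
inequalities, weighted by `2`, `2` and `√37 + 1`, add up to `0 < 0`. So the minimum never exceeds
that `t`, and it equals `t` at the common point.
-/

noncomputable def pathValue (μ₂ μ₃ : ℝ) : ℝ :=
  min (min (4 + (3 - 2 * μ₂ + μ₃) / (1 + μ₂)) (6 + μ₂ + μ₃)) (6 + (2 + μ₂ - 4 * μ₃) / (1 + μ₃))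

theorem pathValue_le {μ₂ μ₃ : ℝ} (h₂ : -1 < μ₂) (h₃ : -1 < μ₃) :
    pathValue μ₂ μ₃ ≤ (√37 + 7) / 2 := by
  have hs : √37 ^ 2 = 37 := Real.sq_sqrt (by norm_num)
  by_contra! h
  simp only [pathValue, lt_min_iff] at h
  obtain ⟨⟨lt_first, lt_middle⟩, lt_last⟩ := h
  have half_plane_first : (√37 - 1) / 2 * (1 + μ₂) < 3 - 2 * μ₂ + μ₃ := by
    rw [← lt_div_iff₀ (by linarith)]
    linarith
  have half_plane_last : (√37 - 5) / 2 * (1 + μ₃) < 2 + μ₂ - 4 * μ₃ := by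
    rw [← lt_div_iff₀ (by linarith)]
    linarith
  have half_plane_middle := mul_lt_mul_of_pos_left lt_middle (by positivity : (0 : ℝ) < √37 + 1)
  exact lt_irrefl (0 : ℝ)
    (by linear_combination 4 * half_plane_first + 4 * half_plane_last + 2 * half_plane_middle - hs)

theorem pathValue_optimal :
    pathValue ((√37 - 5) / 6) ((√37 - 5) / 3) = (√37 + 7) / 2 := by
  have hs : √37 ^ 2 = 37 := Real.sq_sqrt (by norm_num)
  have h5 : 5 < √37 := Real.lt_sqrt_of_sq_lt (by norm_num)
  have first_eq : 4 + (3 - 2 * ((√37 - 5) / 6) + (√37 - 5) / 3) / (1 + (√37 - 5) / 6) =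
      (√37 + 7) / 2 := by
    rw [add_comm, ← eq_sub_iff_add_eq, div_eq_iff (by linarith)]
    linear_combination -hs / 12
  have last_eq : 6 + (2 + (√37 - 5) / 6 - 4 * ((√37 - 5) / 3)) / (1 + (√37 - 5) / 3) =
      (√37 + 7) / 2 := by
    rw [add_comm, ← eq_sub_iff_add_eq, div_eq_iff (by linarith)]
    linear_combination -hs / 6
  have middle_eq : 6 + (√37 - 5) / 6 + (√37 - 5) / 3 = (√37 + 7) / 2 := by ring
  rw [pathValue, first_eq, middle_eq, last_eq, min_self, min_self]

theorem stmt9 :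
    IsGreatest {v : ℝ | ∃ μ₂ μ₃ : ℝ, 0 ≤ μ₂ ∧ μ₂ < 1 ∧ 0 ≤ μ₃ ∧ μ₃ < 1 ∧
        v = min (min (4 + (3 - 2 * μ₂ + μ₃) / (1 + μ₂)) (6 + μ₂ + μ₃))
              (6 + (2 + μ₂ - 4 * μ₃) / (1 + μ₃))}
      ((Real.sqrt 37 + 7) / 2) ∧
    min (min (4 + (3 - 2 * ((Real.sqrt 37 - 5) / 6) + (Real.sqrt 37 - 5) / 3) / (1 + (Real.sqrt 37 - 5) / 6))
             (6 + (Real.sqrt 37 - 5) / 6 + (Real.sqrt 37 - 5) / 3))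
        (6 + (2 + (Real.sqrt 37 - 5) / 6 - 4 * ((Real.sqrt 37 - 5) / 3)) / (1 + (Real.sqrt 37 - 5) / 3))
      = (Real.sqrt 37 + 7) / 2 := by
  have h5 : 5 < √37 := Real.lt_sqrt_of_sq_lt (by norm_num)
  have h8 : √37 < 8 := (Real.sqrt_lt' (by norm_num)).2 (by norm_num)
  refine ⟨⟨⟨(√37 - 5) / 6, (√37 - 5) / 3, by linarith, by linarith, by linarith, by linarith,
    pathValue_optimal.symm⟩, ?_⟩, pathValue_optimal⟩
  rintro v ⟨μ₂, μ₃, h₂, -, h₃, -, rfl⟩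
  exact pathValue_le (by linarith) (by linarith)
end

section
/- For every integer $p\ge 1$ and every real $\mu$ with $0\le\mu<1$, we have $\min\{4+\mu/p,\ 4+(1-2\mu)/(p+\mu)\} \le \frac{1}{2}(\sqrt{13}+5)$. -/
/-- Above `μ = c * p` the second quotient drops below `c`, since then
`c * p + (2 + c) * μ > c * (c + 3) * p = p ≥ 1`. -/
theorem min_div_div_add_le {c p : ℝ} (hc : 0 < c) (hc3 : c * (c + 3) = 1) (hp : 1 ≤ p) (μ : ℝ) :
    min (μ / p) ((1 - 2 * μ) / (p + μ)) ≤ c := by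
  have hp0 : 0 < p := by linarith
  rcases le_or_gt μ (c * p) with hμ | hμ
  · refine (min_le_left _ _).trans ?_
    rwa [div_le_iff₀ hp0]
  · refine (min_le_right _ _).trans ?_
    have hcp : 0 < c * p := mul_pos hc hp0
    rw [div_le_iff₀ (by linarith)]
    nlinarith [mul_lt_mul_of_pos_left hμ (show 0 < c + 2 by linarith)]

theorem sqrt_thirteen_sub_three_div_two_mul : (√13 - 3) / 2 * ((√13 - 3) / 2 + 3) = 1 := by
  nlinarith [Real.sq_sqrt (show (0 : ℝ) ≤ 13 by norm_num)]

theorem stmt10_general (p : ℕ) (hp : 1 ≤ p) (μ : ℝ) :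
    min (4 + μ / p) (4 + (1 - 2 * μ) / (p + μ)) ≤ (Real.sqrt 13 + 5) / 2 := by
  have hc : 0 < (√13 - 3) / 2 := by
    have : (3 : ℝ) < √13 := by
      rw [Real.lt_sqrt (by norm_num)]; norm_num
    linarith
  have key := min_div_div_add_le hc sqrt_thirteen_sub_three_div_two_mul (p := p)
    (by exact_mod_cast hp) μ
  rw [min_add_add_left]
  linarith

theorem stmt10 (p : ℕ) (hp : 1 ≤ p) (μ : ℝ) (hμ0 : 0 ≤ μ) (hμ1 : μ < 1) :
    min (4 + μ / p) (4 + (1 - 2 * μ) / (p + μ)) ≤ (Real.sqrt 13 + 5) / 2 :=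
  stmt10_general p hp μ
end
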